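/- arXiv:1610.08933 — 7 statements merged into one kernel-verified Lean document; each statement's English description precedes it below -/
import Mathlib

section
/- Let n ≥ 2 be an integer, let α be a real number with 1/(n+2) ≤ α ≤ 1/2, let λ₁, …, λₙ be positive real numbers (not necessarily arranged in increasing order), and let σ₁, …, σₙ be arbitrary real numbers. Then the quantity Q := Σ_{i=1}^n σᵢ² + 2 Σ_{i=1}^{n-1} λₙ λᵢ⁻¹ σᵢ² − 4α λₙ [ Σ_{i=1}^n λᵢ⁻¹ σᵢ + ((nα−1) λₙ⁻¹ − α Σ_{i=1}^n λᵢ⁻¹) Σ_{i=1}^n σᵢ ] (Σ_{i=1}^n σᵢ) − 2α² λₙ (Σ_{i=1}^n λᵢ⁻¹)(Σ_{i=1}^n σᵢ)² + (2nα² + (n−1)α − 1)(Σ_{i=1}^n σᵢ)² is nonnegative, i.e. Q ≥ 0. -/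
open Finset

/-- The quantity `Q` from Lemma 3.1 of Brendle-Choi-Daskalopoulos,
indexed so that sums run over `i ∈ {1, …, n}` and `λₙ = lam n`. -/
noncomputable def Q (n : ℕ) (α : ℝ) (lam σ : ℕ → ℝ) : ℝ :=
  (∑ i ∈ Icc 1 n, (σ i) ^ 2)
    + 2 * ∑ i ∈ Icc 1 (n - 1), lam n * (lam i)⁻¹ * (σ i) ^ 2
    - 4 * α * lam n *
        ((∑ i ∈ Icc 1 n, (lam i)⁻¹ * σ i)
          + (((n : ℝ) * α - 1) * (lam n)⁻¹ - α * ∑ i ∈ Icc 1 n, (lam i)⁻¹)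
            * ∑ i ∈ Icc 1 n, σ i)
        * (∑ i ∈ Icc 1 n, σ i)
    - 2 * α ^ 2 * lam n * (∑ i ∈ Icc 1 n, (lam i)⁻¹) * (∑ i ∈ Icc 1 n, σ i) ^ 2
    + (2 * (n : ℝ) * α ^ 2 + ((n : ℝ) - 1) * α - 1) * (∑ i ∈ Icc 1 n, σ i) ^ 2

theorem scalarR (m α x t u : ℝ) (hm : 2 ≤ m) (h1 : 1 ≤ (m+2)*α) (h2 : 2*α ≤ 1)
    (hCS : t^2 ≤ (m-1)*u) :
    0 ≤ x^2 + u - 4*α*x*(t+x) + (-2*(m-1)*α^2 + (m+3)*α - 1)*(t+x)^2 := by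
  have hm1 : (0:ℝ) < m - 1 := by linarith
  set c : ℝ := -2*(m-1)*α^2 + (m+3)*α - 1 with hc
  set B' : ℝ := (m-1)*c + 1 with hB'
  set D' : ℝ := (m-1)*(2*c - 4*α) with hD'
  have hB : 0 < B' := by
    rw [hB', hc]
    nlinarith [mul_nonneg (mul_nonneg (sub_nonneg.2 h2) (by linarith : (0:ℝ) ≤ (m+2)*α - 1)) (by linarith : (0:ℝ) ≤ m - 2), mul_nonneg (sub_nonneg.2 h2) (by linarith : (0:ℝ) ≤ (m+2)*α - 1), sq_nonneg (2*α - 1), sq_nonneg ((m+2)*α - 1)]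
  have hf : 0 ≤ (1 - 2*α)*((m+2)*α - 1) :=
    mul_nonneg (by linarith) (by linarith)
  set G : ℝ := (m-1)*x^2 + t^2 - 4*(m-1)*α*x*(t+x) + (m-1)*c*(t+x)^2 with hG
  have key : 4*B'*G = (2*B'*t + D'*x)^2 + 4*(m-1)^2*((1-2*α)*((m+2)*α-1))*x^2 := by
    rw [hG, hB', hD', hc]; ring
  have hGnn : 0 ≤ G := by
    have h4 : 0 ≤ 4*B'*G := by rw [key]; positivity
    nlinarith [mul_pos hB hB]
  have hE : G ≤ (m-1) * (x^2 + u - 4*α*x*(t+x) + c*(t+x)^2) := by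
    rw [hG]; nlinarith
  nlinarith [hGnn, hE]

/-- Lemma 3.1 (inequality part): for `1/(n+2) ≤ α ≤ 1/2` and positive `λ₁, …, λₙ`,
the quantity `Q` is nonnegative. -/
theorem Q_nonneg (n : ℕ) (hn : 2 ≤ n) (α : ℝ)
    (hα₁ : 1 / ((n : ℝ) + 2) ≤ α) (hα₂ : α ≤ 1 / 2)
    (lam σ : ℕ → ℝ) (hpos : ∀ i ∈ Icc 1 n, 0 < lam i) :
    0 ≤ Q n α lam σ := by
  have hlamn : 0 < lam n := hpos n (by simp [mem_Icc]; omega)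
  have hinv : lam n * (lam n)⁻¹ = 1 := mul_inv_cancel₀ hlamn.ne'
  have hsplit : Icc 1 n = insert n (Icc 1 (n-1)) := by
    have h : insert (n-1+1) (Icc 1 (n-1)) = Icc 1 (n-1+1) := Finset.insert_Icc_right_eq_Icc_add_one (by omega)
    rw [show n - 1 + 1 = n from by omega] at h
    exact h.symm
  have hns : n ∉ Icc 1 (n-1) := by simp [mem_Icc]; omega
  set t := ∑ i ∈ Icc 1 (n-1), σ i with ht
  set u := ∑ i ∈ Icc 1 (n-1), (σ i)^2 with hu
  set V := ∑ i ∈ Icc 1 (n-1), (lam i)⁻¹ * σ i with hV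
  set W := ∑ i ∈ Icc 1 (n-1), (lam i)⁻¹ with hW
  set U := ∑ i ∈ Icc 1 (n-1), (lam i)⁻¹ * (σ i)^2 with hU
  set S := ∑ i ∈ Icc 1 n, σ i with hS
  have hSsplit : S = σ n + t := by rw [hS, hsplit, sum_insert hns]
  have h1 : ∑ i ∈ Icc 1 n, (σ i)^2 = σ n ^ 2 + u := by rw [hsplit, sum_insert hns]
  have h2 : ∑ i ∈ Icc 1 n, (lam i)⁻¹ * σ i = (lam n)⁻¹ * σ n + V := by
    rw [hsplit, sum_insert hns]
  have h3 : ∑ i ∈ Icc 1 n, (lam i)⁻¹ = (lam n)⁻¹ + W := by rw [hsplit, sum_insert hns]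
  have h4 : ∑ i ∈ Icc 1 (n-1), lam n * (lam i)⁻¹ * (σ i)^2 = lam n * U := by
    rw [hU, mul_sum]; exact sum_congr rfl fun i _ => by ring
  have hexp : ∑ i ∈ Icc 1 (n-1), (lam i)⁻¹ * (σ i - α*S)^2
      = U - 2*α*S*V + α^2*S^2*W := by
    rw [hU, hV, hW]
    rw [show ∑ i ∈ Icc 1 (n-1), (lam i)⁻¹ * (σ i - α*S)^2
        = ∑ i ∈ Icc 1 (n-1), ((lam i)⁻¹ * (σ i)^2 - 2*α*S*((lam i)⁻¹ * σ i)
            + α^2*S^2*(lam i)⁻¹) from sum_congr rfl fun i _ => by ring,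
      sum_add_distrib, sum_sub_distrib, ← mul_sum, ← mul_sum]
  set c : ℝ := -2*((n:ℝ)-1)*α^2 + ((n:ℝ)+3)*α - 1 with hc
  have key : Q n α lam σ
      = 2 * lam n * (∑ i ∈ Icc 1 (n-1), (lam i)⁻¹ * (σ i - α*S)^2)
        + (σ n ^ 2 + u - 4*α*(σ n)*S + c*S^2) := by
    rw [hexp, Q, ← hS, h1, h2, h3, h4, hc]
    linear_combination (-4*α*(σ n)*S + (-4*α*((n:ℝ)*α-1) + 2*α^2)*S^2) * hinv
  rw [key]
  have part1 : 0 ≤ 2 * lam n * (∑ i ∈ Icc 1 (n-1), (lam i)⁻¹ * (σ i - α*S)^2) := by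
    apply mul_nonneg (by positivity)
    apply sum_nonneg
    intro i hi
    have : 0 < lam i := hpos i (by simp only [mem_Icc] at hi ⊢; omega)
    positivity
  have hCS : t^2 ≤ ((n:ℝ)-1)*u := by
    have := sq_sum_le_card_mul_sum_sq (s := Icc 1 (n-1)) (f := σ)
    have hcard : #(Icc 1 (n-1)) = n - 1 := by rw [Nat.card_Icc]; omega
    rw [hcard] at this
    have : t^2 ≤ ((n-1 : ℕ) : ℝ) * u := by exact_mod_cast this
    rwa [Nat.cast_sub (by omega), Nat.cast_one] at this
  have hmn : (2:ℝ) ≤ (n:ℝ) := by exact_mod_cast hn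
  have ha1 : 1 ≤ ((n:ℝ)+2)*α := by
    rw [div_le_iff₀ (by linarith)] at hα₁; linarith [hα₁]
  have ha2 : 2*α ≤ 1 := by linarith
  have part2 := scalarR (n:ℝ) α (σ n) t u hmn ha1 ha2 hCS
  have h5 : σ n ^ 2 + u - 4*α*(σ n)*S + c*S^2
      = σ n ^ 2 + u - 4 * α * σ n * (t + σ n)
        + (-2 * ((n:ℝ) - 1) * α ^ 2 + ((n:ℝ) + 3) * α - 1) * (t + σ n) ^ 2 := by
    rw [hSsplit, hc]; ring
  rw [h5]
  exact add_nonneg part1 part2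
end

section
/- Let n ≥ 2 be an integer, let α be a real number with 1/(n+2) ≤ α ≤ 1/2, let λ₁, …, λₙ be positive real numbers, and let σ₁, …, σₙ be real numbers. If the quantity Q := Σ_{i=1}^n σᵢ² + 2 Σ_{i=1}^{n-1} λₙ λᵢ⁻¹ σᵢ² − 4α λₙ [ Σ_{i=1}^n λᵢ⁻¹ σᵢ + ((nα−1) λₙ⁻¹ − α Σ_{i=1}^n λᵢ⁻¹) Σ_{i=1}^n σᵢ ] (Σ_{i=1}^n σᵢ) − 2α² λₙ (Σ_{i=1}^n λᵢ⁻¹)(Σ_{i=1}^n σᵢ)² + (2nα² + (n−1)α − 1)(Σ_{i=1}^n σᵢ)² equals zero, then either σ₁ = σ₂ = ⋯ = σₙ = 0, or α = 1/(n+2) and σ₁ = σ₂ = ⋯ = σ_{n−1} = σₙ/3. -/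
open Finset

set_option maxHeartbeats 1600000 in
/-- Lemma 3.1 (equality case): if `Q = 0`, then either all `σᵢ` vanish, or
`α = 1/(n+2)` and `σ₁ = ⋯ = σ_{n-1} = σₙ/3`. -/
theorem Q_eq_zero (n : ℕ) (hn : 2 ≤ n) (α : ℝ)
    (hα₁ : 1 / ((n : ℝ) + 2) ≤ α) (hα₂ : α ≤ 1 / 2)
    (lam σ : ℕ → ℝ) (hpos : ∀ i ∈ Icc 1 n, 0 < lam i)
    (hQ : Q n α lam σ = 0) :
    (∀ i ∈ Icc 1 n, σ i = 0) ∨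
      (α = 1 / ((n : ℝ) + 2) ∧ ∀ i ∈ Icc 1 (n - 1), σ i = σ n / 3) := by
  obtain ⟨k, rfl⟩ : ∃ k, n = k + 1 := ⟨n - 1, by omega⟩
  have hk : 1 ≤ k := by omega
  have hkr : (1:ℝ) ≤ (k:ℝ) := by exact_mod_cast hk
  have hkpos : (0:ℝ) < (k:ℝ) := by linarith
  have hm : 0 < lam (k+1) := hpos (k+1) (by simp)
  have hlam : ∀ i ∈ Icc 1 k, 0 < lam i := by
    intro i hi
    simp only [mem_Icc] at hi
    exact hpos i (by simp only [mem_Icc]; omega)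
  -- alpha bounds
  have hα₁' : 1 / ((k:ℝ) + 3) ≤ α := by
    push_cast at hα₁
    have h33 : ((k:ℝ) + 1) + 2 = (k:ℝ) + 3 := by ring
    rw [h33] at hα₁
    exact hα₁
  have h3pos : (0:ℝ) < (k:ℝ) + 3 := by linarith
  have hu : (0:ℝ) ≤ ((k:ℝ) + 3) * α - 1 := by
    rw [div_le_iff₀ h3pos] at hα₁'
    nlinarith [hα₁']
  have hv : (0:ℝ) ≤ 1 - 2 * α := by linarith
  have hαpos : 0 < α := lt_of_lt_of_le (by positivity) hα₁'
  -- unfold and split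
  simp only [Q, Nat.add_sub_cancel] at hQ
  rw [Finset.sum_Icc_succ_top (by omega : 1 ≤ k+1) σ,
      Finset.sum_Icc_succ_top (by omega : 1 ≤ k+1) (fun i => σ i ^ 2),
      Finset.sum_Icc_succ_top (by omega : 1 ≤ k+1) (fun i => (lam i)⁻¹ * σ i),
      Finset.sum_Icc_succ_top (by omega : 1 ≤ k+1) (fun i => (lam i)⁻¹)] at hQ
  push_cast at hQ
  set m : ℝ := lam (k+1) with hmdef
  set y : ℝ := σ (k+1) with hy
  set T : ℝ := ∑ i ∈ Icc 1 k, σ i with hT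
  set U : ℝ := ∑ i ∈ Icc 1 k, σ i ^ 2 with hU
  set W : ℝ := ∑ i ∈ Icc 1 k, (lam i)⁻¹ * σ i with hW
  set L : ℝ := ∑ i ∈ Icc 1 k, (lam i)⁻¹ with hL
  set V : ℝ := ∑ i ∈ Icc 1 k, m * (lam i)⁻¹ * σ i ^ 2 with hV
  set P : ℝ := ∑ i ∈ Icc 1 k, 2 * m * (lam i)⁻¹ * (σ i - α * (T + y)) ^ 2 with hP
  have hinv : m * m⁻¹ = 1 := mul_inv_cancel₀ hm.ne'
  have hPeq : P = 2 * V - 4 * α * m * (T + y) * W + 2 * α ^ 2 * m * (T + y) ^ 2 * L := by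
    rw [hP, hV, hW, hL]
    simp only [Finset.mul_sum]
    rw [← Finset.sum_sub_distrib, ← Finset.sum_add_distrib]
    exact Finset.sum_congr rfl fun i _ => by ring
  have hPR : P + (U + y ^ 2 - 4 * α * y * (T + y)
      + (-2 * (k:ℝ) * α ^ 2 + ((k:ℝ) + 4) * α - 1) * (T + y) ^ 2) = 0 := by
    rw [hPeq]
    linear_combination hQ - (4*α*T*(T+y) - 2*α^2*(T+y)^2 - 4*(k:ℝ)*α^2*(T+y)^2) * hinv
  have hPnn : 0 ≤ P := by
    rw [hP]
    refine Finset.sum_nonneg fun i hi => ?_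
    have h1 := hlam i hi
    positivity
  -- Cauchy-Schwarz
  have hCS : T ^ 2 ≤ (k:ℝ) * U := by
    have h := sq_sum_le_card_mul_sum_sq (s := Icc 1 k) (f := σ)
    rw [Nat.card_Icc, Nat.add_sub_cancel] at h
    exact_mod_cast h
  -- positivity of the quadratic form
  have hkA : 0 < 1 + (k:ℝ) * (-2 * (k:ℝ) * α ^ 2 + ((k:ℝ) + 4) * α - 1) := by
    have h1 : (0:ℝ) ≤ (k:ℝ)^2 * ((k:ℝ)+3) * ((((k:ℝ)+3) * α - 1) * (1 - 2*α)) :=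
      mul_nonneg (by positivity) (mul_nonneg hu hv)
    have h4 : (0:ℝ) ≤ (((k:ℝ)+3)^2 - 9) * (((k:ℝ)+3) * α - 1) :=
      mul_nonneg (by nlinarith) hu
    nlinarith [h1, h4, hkr, sq_nonneg ((k:ℝ)+3)]
  have hq' : 0 ≤ T ^ 2 + (k:ℝ) * (y ^ 2 - 4 * α * y * (T + y)
      + (-2 * (k:ℝ) * α ^ 2 + ((k:ℝ) + 4) * α - 1) * (T + y) ^ 2) := by
    nlinarith [hkA,
      sq_nonneg ((1 + (k:ℝ) * (-2 * (k:ℝ) * α ^ 2 + ((k:ℝ) + 4) * α - 1)) * T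
        + (k:ℝ) * ((-2 * (k:ℝ) * α ^ 2 + ((k:ℝ) + 4) * α - 1) - 2 * α) * y),
      mul_nonneg (mul_nonneg (mul_nonneg (sq_nonneg (k:ℝ)) hu) hv) (sq_nonneg y)]
  have hRnn : 0 ≤ U + y ^ 2 - 4 * α * y * (T + y)
      + (-2 * (k:ℝ) * α ^ 2 + ((k:ℝ) + 4) * α - 1) * (T + y) ^ 2 := by
    nlinarith [hq', hCS, hkpos]
  have hPzero : P = 0 := by linarith
  have hR0 : U + y ^ 2 - 4 * α * y * (T + y)
      + (-2 * (k:ℝ) * α ^ 2 + ((k:ℝ) + 4) * α - 1) * (T + y) ^ 2 = 0 := by linarith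
  -- each term of P vanishes
  have hterm : ∀ i ∈ Icc 1 k, σ i = α * (T + y) := by
    have hsum0 := (Finset.sum_eq_zero_iff_of_nonneg (fun i hi => by
      have h1 := hlam i hi
      positivity : ∀ i ∈ Icc 1 k, (0:ℝ) ≤ 2 * m * (lam i)⁻¹ * (σ i - α * (T + y)) ^ 2)).mp
      (hP ▸ hPzero)
    intro i hi
    have h := hsum0 i hi
    have hli := hlam i hi
    have hne : (2 * m * (lam i)⁻¹) ≠ 0 :=
      (mul_pos (mul_pos two_pos hm) (inv_pos.mpr hli)).ne'
    have h2 : (σ i - α * (T + y)) ^ 2 = 0 := by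
      rcases mul_eq_zero.mp h with h' | h'
      · exact absurd h' hne
      · exact h'
    have h3 := sq_eq_zero_iff.mp h2
    linarith [h3]
  have hT2 : T = (k:ℝ) * (α * (T + y)) := by
    conv_lhs => rw [hT, Finset.sum_congr rfl hterm]
    rw [Finset.sum_const, Nat.card_Icc, Nat.add_sub_cancel, nsmul_eq_mul]
  have hU2 : U = (k:ℝ) * (α * (T + y)) ^ 2 := by
    conv_lhs => rw [hU, Finset.sum_congr rfl (fun i hi => by rw [hterm i hi] :
      ∀ i ∈ Icc 1 k, σ i ^ 2 = (α * (T + y)) ^ 2)]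
    rw [Finset.sum_const, Nat.card_Icc, Nat.add_sub_cancel, nsmul_eq_mul]
  have key : (k:ℝ) * α * (((k:ℝ) + 3) * α - 1) * (T + y) ^ 2 = 0 := by
    linear_combination hR0 - hU2
      + ((1 - 4*α - (k:ℝ)*α) * T + (2 - 4*α - (k:ℝ)*α) * y) * hT2
  by_cases hα : α = 1 / (((k:ℕ) + 1 : ℝ) + 2)
  · refine Or.inr ⟨by exact_mod_cast hα, ?_⟩
    have hα3 : ((k:ℝ) + 3) * α = 1 := by
      rw [hα]
      field_simp
      ring
    simp only [Nat.add_sub_cancel]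
    intro i hi
    have h2 := hterm i hi
    have h3 : y = 3 * (α * (T + y)) := by
      linear_combination -hT2 - (T + y) * hα3
    rw [h2]
    linear_combination (-1/3 : ℝ) * h3
  · left
    have hune : ((k:ℝ) + 3) * α - 1 ≠ 0 := by
      intro h
      apply hα
      rw [eq_div_iff (by positivity : ((k:ℕ) + 1 : ℝ) + 2 ≠ 0)]
      push_cast
      linarith [h]
    have hSS : (T + y) ^ 2 = 0 := by
      have h1 : (k:ℝ) * α * (((k:ℝ) + 3) * α - 1) ≠ 0 :=
        mul_ne_zero (mul_ne_zero hkpos.ne' hαpos.ne') hune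
      rcases mul_eq_zero.mp key with h | h
      · exact absurd h h1
      · exact h
    have hS0 : T + y = 0 := sq_eq_zero_iff.mp hSS
    have hT0 : T = 0 := by rw [hT2, hS0, mul_zero, mul_zero]
    have hy0 : y = 0 := by linarith
    intro i hi
    simp only [mem_Icc] at hi
    by_cases hik : i ≤ k
    · have h := hterm i (by simp only [mem_Icc]; omega)
      rw [h, hS0, mul_zero]
    · have hik1 : i = k + 1 := by omega
      rw [hik1, ← hy]
      exact hy0
end

section
/- Let n ≥ 2 be an integer, let α be any real number, let λ₁, …, λₙ be positive real numbers, and let σ₁, …, σₙ be real numbers with Σ_{i=1}^n σᵢ = 1. Define τᵢ = σᵢ − α for i = 1, …, n−1 and τₙ = σₙ − 1 + (n−1)α. Then the quantity Q := Σ_{i=1}^n σᵢ² + 2 Σ_{i=1}^{n-1} λₙ λᵢ⁻¹ σᵢ² − 4α λₙ [ Σ_{i=1}^n λᵢ⁻¹ σᵢ + ((nα−1) λₙ⁻¹ − α Σ_{i=1}^n λᵢ⁻¹) Σ_{i=1}^n σᵢ ] (Σ_{i=1}^n σᵢ) − 2α² λₙ (Σ_{i=1}^n λᵢ⁻¹)(Σ_{i=1}^n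 σᵢ)² + (2nα² + (n−1)α − 1)(Σ_{i=1}^n σᵢ)² satisfies the identity Q = Σ_{i=1}^n τᵢ² + 2(1 − (n+2)α) τₙ + 2 Σ_{i=1}^{n-1} λₙ λᵢ⁻¹ τᵢ² + (n−1)α((n+2)α − 1). -/
open Finset

/-- First identity in the proof of Lemma 3.1: with `∑ σᵢ = 1`,
`τᵢ = σᵢ − α` for `i < n`, and `τₙ = σₙ − 1 + (n−1)α`, one has
`Q = ∑ τᵢ² + 2(1 − (n+2)α) τₙ + 2 ∑_{i<n} λₙ λᵢ⁻¹ τᵢ² + (n−1)α((n+2)α − 1)`. -/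
theorem Q_identity_tau (n : ℕ) (hn : 2 ≤ n) (α : ℝ)
    (lam σ τ : ℕ → ℝ) (hpos : ∀ i ∈ Icc 1 n, 0 < lam i)
    (hσ : ∑ i ∈ Icc 1 n, σ i = 1)
    (hτ : ∀ i ∈ Icc 1 (n - 1), τ i = σ i - α)
    (hτn : τ n = σ n - 1 + ((n : ℝ) - 1) * α) :
    Q n α lam σ
      = (∑ i ∈ Icc 1 n, (τ i) ^ 2)
        + 2 * (1 - ((n : ℝ) + 2) * α) * τ n
        + 2 * ∑ i ∈ Icc 1 (n - 1), lam n * (lam i)⁻¹ * (τ i) ^ 2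
        + ((n : ℝ) - 1) * α * (((n : ℝ) + 2) * α - 1) := by
  obtain ⟨m, rfl⟩ : ∃ m, n = m + 1 := ⟨n - 1, by omega⟩
  have hm : (1:ℕ) ≤ m := by omega
  have hln : lam (m+1) ≠ 0 := (hpos _ (by simp)).ne'
  have hx : lam (m+1) * (lam (m+1))⁻¹ = 1 := mul_inv_cancel₀ hln
  simp only [Nat.add_sub_cancel] at hτ ⊢
  unfold Q
  simp only [Nat.add_sub_cancel]
  rw [Finset.sum_Icc_succ_top (by omega : 1 ≤ m+1) (fun i => σ i ^ 2),
      Finset.sum_Icc_succ_top (by omega : 1 ≤ m+1) (fun i => (lam i)⁻¹ * σ i),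
      Finset.sum_Icc_succ_top (by omega : 1 ≤ m+1) σ,
      Finset.sum_Icc_succ_top (by omega : 1 ≤ m+1) (fun i => (lam i)⁻¹),
      Finset.sum_Icc_succ_top (by omega : 1 ≤ m+1) (fun i => τ i ^ 2)] at *
  -- rewrite τ sums
  have e1 : ∑ i ∈ Icc 1 m, τ i ^ 2
      = (∑ i ∈ Icc 1 m, σ i ^ 2) - 2*α*(∑ i ∈ Icc 1 m, σ i) + (m:ℝ)*α^2 := by
    rw [Finset.sum_congr rfl
      (fun i hi => show τ i ^ 2 = σ i ^ 2 - 2*α*σ i + α^2 from by rw [hτ i hi]; ring),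
      Finset.sum_add_distrib, Finset.sum_sub_distrib, ← Finset.mul_sum, Finset.sum_const,
      Nat.card_Icc, show m + 1 - 1 = m from by omega, nsmul_eq_mul]
  have e2 : ∑ i ∈ Icc 1 m, lam (m+1) * (lam i)⁻¹ * τ i ^ 2
      = (∑ i ∈ Icc 1 m, lam (m+1) * (lam i)⁻¹ * σ i ^ 2)
        - 2*α*(lam (m+1) * ∑ i ∈ Icc 1 m, (lam i)⁻¹ * σ i)
        + α^2 * (lam (m+1) * ∑ i ∈ Icc 1 m, (lam i)⁻¹) := by
    rw [Finset.sum_congr rfl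
      (fun i hi => show lam (m+1) * (lam i)⁻¹ * τ i ^ 2
        = lam (m+1) * (lam i)⁻¹ * σ i ^ 2 - (2*α*lam (m+1)) * ((lam i)⁻¹ * σ i)
          + (α^2 * lam (m+1)) * (lam i)⁻¹ from by rw [hτ i hi]; ring),
      Finset.sum_add_distrib, Finset.sum_sub_distrib, ← Finset.mul_sum, ← Finset.mul_sum]
    ring
  have e3 : ∑ i ∈ Icc 1 m, lam (m+1) * (lam i)⁻¹ * σ i ^ 2
      = lam (m+1) * ∑ i ∈ Icc 1 m, (lam i)⁻¹ * σ i ^ 2 := by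
    rw [Finset.mul_sum]; exact Finset.sum_congr rfl fun i _ => by ring
  rw [e1, e2, e3]
  have hσn : σ (m+1) = 1 - ∑ i ∈ Icc 1 m, σ i := by linarith
  rw [hτn, hσn]
  push_cast
  field_simp
  ring
end

section
/- Let n ≥ 2 be an integer, let α be any real number, let λ₁, …, λₙ be positive real numbers, and let σ₁, …, σₙ be real numbers with Σ_{i=1}^n σᵢ = 1. Define τᵢ = σᵢ − α for i = 1, …, n−1 and τₙ = σₙ − 1 + (n−1)α. Then the quantity Q := Σ_{i=1}^n σᵢ² + 2 Σ_{i=1}^{n-1} λₙ λᵢ⁻¹ σᵢ² − 4α λₙ [ Σ_{i=1}^n λᵢ⁻¹ σᵢ + ((nα−1) λₙ⁻¹ − α Σ_{i=1}^n λᵢ⁻¹) Σ_{i=1}^n σᵢ ] (Σ_{i=1}^n σᵢ) − 2α² λₙ (Σ_{i=1}^n λᵢ⁻¹)(Σ_{i=1}^n σᵢ)² + (2nα² + (n−1)α − 1)(Σ_{i=1}^n σᵢ)² satisfies the identity Q = (n/(n−1)) (τₙ + ((n−1)/n)(1 − (n+2)α))² + Σ_{i=1}^{n-1} (τᵢ +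 τₙ/(n−1))² + 2 Σ_{i=1}^{n-1} λₙ λᵢ⁻¹ τᵢ² + ((n−1)/n)(1 − 2α)((n+2)α − 1). -/
open Finset

theorem Finset.sum_mul_add_sq {ι R : Type*} [CommSemiring R] (s : Finset ι) (w x : ι → R)
    (c : R) :
    ∑ i ∈ s, w i * (x i + c) ^ 2
      = ∑ i ∈ s, w i * x i ^ 2 + 2 * c * ∑ i ∈ s, w i * x i + c ^ 2 * ∑ i ∈ s, w i := by
  simp only [mul_sum, ← sum_add_distrib]
  exact sum_congr rfl fun i _ => by ring

theorem Finset.sum_add_sq {ι R : Type*} [CommSemiring R] (s : Finset ι) (x : ι → R) (c : R) :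
    ∑ i ∈ s, (x i + c) ^ 2 = ∑ i ∈ s, x i ^ 2 + 2 * c * ∑ i ∈ s, x i + #s * c ^ 2 := by
  simpa [mul_comm] using sum_mul_add_sq s 1 x c

theorem Q_eq_of_sum_eq_one (m : ℕ) (α : ℝ) (lam σ : ℕ → ℝ) (hL : lam (m + 1) ≠ 0)
    (hσ : ∑ i ∈ Icc 1 (m + 1), σ i = 1) :
    Q (m + 1) α lam σ
      = ∑ i ∈ Icc 1 (m + 1), σ i ^ 2
        + 2 * ∑ i ∈ Icc 1 m, lam (m + 1) * (lam i)⁻¹ * (σ i - α) ^ 2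
        - 4 * α * σ (m + 1) - 2 * m * α ^ 2 + (m + 4) * α - 1 := by
  have htop (f : ℕ → ℝ) : ∑ i ∈ Icc 1 (m + 1), f i = ∑ i ∈ Icc 1 m, f i + f (m + 1) :=
    sum_Icc_succ_top (by omega) f
  have hweighted : ∑ i ∈ Icc 1 m, lam (m + 1) * (lam i)⁻¹ * σ i
      = lam (m + 1) * ∑ i ∈ Icc 1 m, (lam i)⁻¹ * σ i := by
    rw [mul_sum]; exact sum_congr rfl fun i _ => by ring
  simp_rw [sub_eq_add_neg (σ _) α]
  rw [Q, hσ, Nat.add_sub_cancel, sum_mul_add_sq, hweighted, ← mul_sum,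
    htop fun i => (lam i)⁻¹ * σ i, htop fun i => (lam i)⁻¹]
  push_cast
  field_simp
  ring

/-- Final identity in the proof of Lemma 3.1: with `∑ σᵢ = 1`,
`τᵢ = σᵢ − α` for `i < n`, and `τₙ = σₙ − 1 + (n−1)α`, one has
`Q = (n/(n−1))(τₙ + ((n−1)/n)(1 − (n+2)α))² + ∑_{i<n} (τᵢ + τₙ/(n−1))²
      + 2 ∑_{i<n} λₙ λᵢ⁻¹ τᵢ² + ((n−1)/n)(1 − 2α)((n+2)α − 1)`. -/
theorem Q_identity_sum_of_squares (n : ℕ) (hn : 2 ≤ n) (α : ℝ)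
    (lam σ τ : ℕ → ℝ) (hpos : ∀ i ∈ Icc 1 n, 0 < lam i)
    (hσ : ∑ i ∈ Icc 1 n, σ i = 1)
    (hτ : ∀ i ∈ Icc 1 (n - 1), τ i = σ i - α)
    (hτn : τ n = σ n - 1 + ((n : ℝ) - 1) * α) :
    Q n α lam σ
      = ((n : ℝ) / ((n : ℝ) - 1))
          * (τ n + (((n : ℝ) - 1) / (n : ℝ)) * (1 - ((n : ℝ) + 2) * α)) ^ 2
        + (∑ i ∈ Icc 1 (n - 1), (τ i + τ n / ((n : ℝ) - 1)) ^ 2)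
        + 2 * ∑ i ∈ Icc 1 (n - 1), lam n * (lam i)⁻¹ * (τ i) ^ 2
        + (((n : ℝ) - 1) / (n : ℝ)) * (1 - 2 * α) * (((n : ℝ) + 2) * α - 1) := by
  obtain ⟨m, rfl⟩ : ∃ m, n = m + 1 := ⟨n - 1, by omega⟩
  have hm : (m : ℝ) ≠ 0 := by norm_cast; omega
  rw [Nat.add_sub_cancel] at hτ ⊢
  push_cast at hτn ⊢
  simp only [add_sub_cancel_right] at hτn ⊢
  have hσi : ∀ i ∈ Icc 1 m, σ i = τ i + α := fun i hi => by rw [hτ i hi]; ring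
  have hτsum : ∑ i ∈ Icc 1 m, τ i = -τ (m + 1) := by
    rw [sum_Icc_succ_top (by omega), sum_congr rfl hσi, sum_add_distrib, sum_const,
      Nat.card_Icc, Nat.add_sub_cancel, nsmul_eq_mul] at hσ
    linarith
  have hsq : ∑ i ∈ Icc 1 m, σ i ^ 2 = ∑ i ∈ Icc 1 m, (τ i + α) ^ 2 :=
    sum_congr rfl fun i hi => by rw [hσi i hi]
  have hweighted : ∑ i ∈ Icc 1 m, lam (m + 1) * (lam i)⁻¹ * (σ i - α) ^ 2
      = ∑ i ∈ Icc 1 m, lam (m + 1) * (lam i)⁻¹ * τ i ^ 2 :=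
    sum_congr rfl fun i hi => by rw [hτ i hi]
  rw [Q_eq_of_sum_eq_one m α lam σ (hpos _ (by simp)).ne' hσ, sum_Icc_succ_top (by omega), hsq,
    hweighted, sum_add_sq, sum_add_sq, hτsum, Nat.card_Icc, Nat.add_sub_cancel,
    show σ (m + 1) = τ (m + 1) + 1 - m * α by linarith]
  field_simp
  ring
end

section
/- Let n ≥ 2 and 1 ≤ μ ≤ n be integers, and let λ₁ ≤ λ₂ ≤ ⋯ ≤ λₙ be real numbers with λ₁ = λ₂ = ⋯ = λ_μ and, if μ < n, λ_μ < λ_{μ+1} (so μ is the multiplicity of the smallest value). Let A : ℝ → Matrix (Fin n) (Fin n) ℝ be a smooth one-parameter family of symmetric n×n matrices with A(0) equal to the diagonal matrix diag(λ₁, …, λₙ), and let φ : ℝ → ℝ be a smooth function with φ(0) = λ₁, such that for every s ∈ ℝ and every vector v ∈ ℝⁿ one has vᵀ A(s) v ≥ φ(s) ‖v‖². Then the first derivative at s = 0 satisfies A′(0)_{kl} = φ′(0) δ_{kl} for all indices 1 ≤ k, l ≤ μ. -/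
open Finset

/-- First-derivative identity at a touching point (matrix version of the first part of
Lemma 4.1): if `A(s)` is a smooth family of symmetric matrices with `A(0) = diag(λ)`,
the smallest value `λ₁ = ⋯ = λ_μ` of the ordered list `λ` has multiplicity `μ`, and
`vᵀ A(s) v ≥ φ(s) ‖v‖²` for a smooth function `φ` with `φ(0) = λ₁`, then
`A′(0)_{kl} = φ′(0) δ_{kl}` for all indices `k, l ≤ μ` (written `0`-indexed as `k, l < μ`). -/
theorem deriv_at_touching_point (n μ : ℕ) (hn : 2 ≤ n) (hμ1 : 1 ≤ μ) (hμn : μ ≤ n)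
    (lam : Fin n → ℝ)
    (hmono : ∀ i j : Fin n, i ≤ j → lam i ≤ lam j)
    (hmult : ∀ i : Fin n, (i : ℕ) < μ → lam i = lam ⟨0, by omega⟩)
    (hgap : ∀ hμ : μ < n, lam ⟨μ - 1, by omega⟩ < lam ⟨μ, hμ⟩)
    (A : ℝ → Matrix (Fin n) (Fin n) ℝ)
    (hA : ∀ i j : Fin n, ContDiff ℝ (⊤ : ℕ∞) fun s => A s i j)
    (hAsymm : ∀ s : ℝ, (A s).IsSymm)
    (hA0 : A 0 = Matrix.diagonal lam)
    (φ : ℝ → ℝ) (hφ : ContDiff ℝ (⊤ : ℕ∞) φ)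
    (hφ0 : φ 0 = lam ⟨0, by omega⟩)
    (hbar : ∀ (s : ℝ) (v : EuclideanSpace ℝ (Fin n)),
      φ s * ‖v‖ ^ 2 ≤ ∑ i, ∑ j, v i * A s i j * v j) :
    ∀ k l : Fin n, (k : ℕ) < μ → (l : ℕ) < μ →
      deriv (fun s => A s k l) 0 = deriv φ 0 * (if k = l then 1 else 0) := by
  have hdiff : ∀ i j : Fin n, Differentiable ℝ (fun s => A s i j) :=
    fun i j => (hA i j).differentiable (by simp)
  have hφd : Differentiable ℝ φ := hφ.differentiable (by simp)
  set D : Fin n → Fin n → ℝ := fun i j => deriv (fun s => A s i j) 0 with hDdef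
  have key : ∀ v : EuclideanSpace ℝ (Fin n),
      (∀ i : Fin n, μ ≤ (i : ℕ) → v i = 0) →
      ∑ i, ∑ j, v i * D i j * v j = deriv φ 0 * ∑ i, v i * v i := by
    intro v hv
    have hnorm : ‖v‖ ^ 2 = ∑ i, v i * v i := by
      rw [EuclideanSpace.norm_eq, Real.sq_sqrt (Finset.sum_nonneg fun i _ => sq_nonneg _)]
      simp [Real.norm_eq_abs, sq_abs, sq]
    set F : ℝ → ℝ := fun s => (∑ i, ∑ j, v i * A s i j * v j) - φ s * ‖v‖ ^ 2 with hF
    have hF0 : F 0 = 0 := by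
      have h1 : ∑ i, ∑ j, v i * A 0 i j * v j = ∑ i, v i * lam i * v i := by
        refine Finset.sum_congr rfl fun i _ => ?_
        rw [hA0]
        rw [Finset.sum_eq_single i]
        · simp [Matrix.diagonal_apply_eq]
        · intro j _ hj
          simp [Matrix.diagonal_apply_ne' lam hj]
        · simp
      have h2 : ∑ i, v i * lam i * v i = lam ⟨0, by omega⟩ * ∑ i, v i * v i := by
        rw [Finset.mul_sum]
        refine Finset.sum_congr rfl fun i _ => ?_
        by_cases hi : (i : ℕ) < μ
        · rw [hmult i hi]; ring
        · rw [hv i (by omega)]; ring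
      simp only [hF, h1, h2, hφ0, hnorm]
      ring
    have hFpos : ∀ s, 0 ≤ F s := fun s => sub_nonneg.mpr (hbar s v)
    have hmin : IsLocalMin F 0 :=
      Filter.Eventually.of_forall fun s => by rw [hF0]; exact hFpos s
    have hF' : HasDerivAt F ((∑ i, ∑ j, v i * D i j * v j) - deriv φ 0 * ‖v‖ ^ 2) 0 := by
      apply HasDerivAt.sub
      · apply HasDerivAt.fun_sum
        intro i _
        apply HasDerivAt.fun_sum
        intro j _
        exact (((hdiff i j).differentiableAt.hasDerivAt).const_mul (v i)).mul_const (v j)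
      · exact (hφd.differentiableAt.hasDerivAt).mul_const _
    have hz := hmin.deriv_eq_zero
    rw [hF'.deriv] at hz
    have := sub_eq_zero.mp hz
    rw [hnorm] at this
    exact this
  have hsymmD : ∀ i j : Fin n, D i j = D j i := by
    intro i j
    have : (fun s => A s i j) = fun s => A s j i := by
      funext s
      exact ((hAsymm s).apply i j).symm
    simp only [hDdef, this]
  intro k l hk hl
  -- diagonal case helper
  have hdiag : ∀ k : Fin n, (k : ℕ) < μ → D k k = deriv φ 0 := by
    intro k hk
    have h := key (WithLp.toLp 2 (fun i => if i = k then (1:ℝ) else 0)) (by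
      intro i hi
      simp only [WithLp.ofLp_toLp]
      rw [if_neg]
      rintro rfl; omega)
    simpa [WithLp.ofLp_toLp, mul_ite, ite_mul, Finset.sum_ite_eq'] using h
  by_cases hkl : k = l
  · subst hkl
    simpa using hdiag k hk
  · have h := key (WithLp.toLp 2 (fun i => (if i = k then (1:ℝ) else 0) + (if i = l then 1 else 0))) (by
      intro i hi
      have h1 : i ≠ k := by rintro rfl; omega
      have h2 : i ≠ l := by rintro rfl; omega
      simp [h1, h2])
    simp only [WithLp.ofLp_toLp, add_mul, mul_add, Finset.sum_add_distrib, ite_mul, mul_ite, mul_one, mul_zero,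
      one_mul, zero_mul, Finset.sum_ite_eq', Finset.mem_univ, if_true] at h
    rw [hdiag k hk, hdiag l hl, hsymmD l k] at h
    simp only [hkl, if_false, if_neg (Ne.symm hkl)] at h ⊢
    have : D k l = 0 := by linarith
    rw [hDdef] at this
    simp only at this
    rw [this, mul_zero]
end

section
/- Let n ≥ 2 be an integer, let α be a real number with α ≥ 1/2, let k be an index with 1 ≤ k ≤ n, and let a₁, …, aₙ be real numbers. Then Σ_{i=1}^n aᵢ² + 2 Σ_{i ≠ k} aᵢ² + ((n−1)α − 1)(Σ_{i=1}^n aᵢ)² ≥ 0. -/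
open Finset

/-- The inequality corresponding to `LZ − (2α+1) bⁱʲ ∇ᵢK^α ∇ⱼZ ≥ 0` near an umbilic
point of a self-similar solution with `α ≥ 1/2`: for real numbers `a₁, …, aₙ`,
`∑ aᵢ² + 2 ∑_{i≠k} aᵢ² + ((n−1)α − 1)(∑ aᵢ)² ≥ 0`. -/
theorem umbilic_gradient_inequality (n : ℕ) (hn : 2 ≤ n) (α : ℝ) (hα : 1 / 2 ≤ α)
    (k : ℕ) (hk : k ∈ Icc 1 n) (a : ℕ → ℝ) :
    0 ≤ (∑ i ∈ Icc 1 n, (a i) ^ 2)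
        + 2 * ∑ i ∈ (Icc 1 n).erase k, (a i) ^ 2
        + (((n : ℝ) - 1) * α - 1) * (∑ i ∈ Icc 1 n, a i) ^ 2 := by
  have hS0 : 0 ≤ ∑ i ∈ Icc 1 n, (a i) ^ 2 :=
    Finset.sum_nonneg fun i _ => sq_nonneg _
  have hT0 : 0 ≤ ∑ i ∈ (Icc 1 n).erase k, (a i) ^ 2 :=
    Finset.sum_nonneg fun i _ => sq_nonneg _
  by_cases hc : 0 ≤ ((n : ℝ) - 1) * α - 1
  · have := mul_nonneg hc (sq_nonneg (∑ i ∈ Icc 1 n, a i))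
    linarith
  · push_neg at hc
    have hn2 : n = 2 := by
      by_contra h
      have h3 : 3 ≤ n := by omega
      have h3' : (3 : ℝ) ≤ (n : ℝ) := by exact_mod_cast h3
      nlinarith
    subst hn2
    have hmem : k = 1 ∨ k = 2 := by
      simp only [Finset.mem_Icc] at hk; omega
    have hI : Icc 1 2 = ({1, 2} : Finset ℕ) := by decide
    rcases hmem with rfl | rfl
    · rw [hI, show ({1, 2} : Finset ℕ).erase 1 = {2} from by decide]
      simp only [Finset.sum_pair (by decide : (1:ℕ) ≠ 2), Finset.sum_singleton]
      push_cast
      nlinarith [sq_nonneg (a 1 - a 2), sq_nonneg (a 2),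
        mul_nonneg (by linarith : (0:ℝ) ≤ α - 1/2) (sq_nonneg (a 1 + a 2))]
    · rw [hI, show ({1, 2} : Finset ℕ).erase 2 = {1} from by decide]
      simp only [Finset.sum_pair (by decide : (1:ℕ) ≠ 2), Finset.sum_singleton]
      push_cast
      nlinarith [sq_nonneg (a 1 - a 2), sq_nonneg (a 1),
        mul_nonneg (by linarith : (0:ℝ) ≤ α - 1/2) (sq_nonneg (a 1 + a 2))]
end

section
/- Let n ≥ 2 and 1 ≤ μ ≤ n be integers, and let λ₁, …, λₙ be positive real numbers with λ₁ = λ₂ = ⋯ = λ_μ, λ₁ < λ_l for all l > μ. Let T : {1,…,n} × {1,…,n} → ℝ be a symmetric array (T_{kl} = T_{lk} for all k, l) such that T_{kl} = 0 whenever 2 ≤ l ≤ μ. Then −2 Σ_{k=1}^n Σ_{l > μ} λ_k⁻¹ (λ_l − λ₁)⁻¹ T_{kl}² + Σ_{k=1}^n Σ_{l=1}^n λ_k⁻¹ λ_l⁻¹ T_{kl}² ≤ −2 Σ_{k > μ} λ₁⁻¹ ((λ_k − λ₁)⁻¹ − λ_k⁻¹) T_{k1}² + λ₁⁻² T_{11}².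 -/
/-!
Split every index range `{1, …, n}` as `{1} ∪ {2, …, μ} ∪ {μ+1, …, n}`. The hypotheses kill
all terms with an index in `{2, …, μ}`, and by symmetry of `T` the terms in which exactly one
index equals `1` cancel against the right-hand side. What remains is the `(k, l) ∈ {μ+1, …, n}²`
block, where `λ_l⁻¹ ≤ (λ_l − λ₁)⁻¹` because `0 ≤ λ₁ < λ_l`.
-/

open Finset

section Splitting

variable {M : Type*} [AddCommMonoid M] {n μ : ℕ}

theorem sum_Icc_one_eq_add_sum_Icc_of_eq_zero (hμ1 : 1 ≤ μ) (hμn : μ ≤ n) {g : ℕ → M}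
    (hg : ∀ l ∈ Icc 2 μ, g l = 0) :
    ∑ l ∈ Icc 1 n, g l = g 1 + ∑ l ∈ Icc (μ + 1) n, g l := by
  have hIoc : ∀ a, Icc (a + 1) n = Ioc a n := fun a => Icc_add_one_left_eq_Ioc a n
  rw [hIoc, ← zero_add 1, hIoc, ← sum_Ioc_consecutive g μ.zero_le hμn, ← Icc_add_one_left_eq_Ioc,
    zero_add]
  congr 1
  refine sum_eq_single_of_mem 1 (mem_Icc.2 ⟨le_rfl, hμ1⟩) fun l hl hl1 => hg l ?_
  rw [mem_Icc] at hl ⊢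
  omega

theorem sum_Icc_one_sum_Icc_one_eq_of_symm (hμ1 : 1 ≤ μ) (hμn : μ ≤ n) {F : ℕ → ℕ → M}
    (hsymm : ∀ k l, F k l = F l k) (hzero : ∀ k, ∀ l ∈ Icc 2 μ, F k l = 0) :
    ∑ k ∈ Icc 1 n, ∑ l ∈ Icc 1 n, F k l
      = F 1 1 + 2 • ∑ k ∈ Icc (μ + 1) n, F k 1
        + ∑ k ∈ Icc (μ + 1) n, ∑ l ∈ Icc (μ + 1) n, F k l := by
  have hrow : ∀ k ∈ Icc 2 μ, ∑ l ∈ Icc (μ + 1) n, F k l = 0 := fun k hk =>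
    sum_eq_zero fun l _ => (hsymm k l).trans (hzero l k hk)
  rw [sum_congr rfl fun k _ => sum_Icc_one_eq_add_sum_Icc_of_eq_zero hμ1 hμn (hzero k),
    sum_add_distrib,
    sum_Icc_one_eq_add_sum_Icc_of_eq_zero hμ1 hμn fun k hk => (hsymm k 1).trans (hzero 1 k hk),
    sum_Icc_one_eq_add_sum_Icc_of_eq_zero hμ1 hμn hrow, two_nsmul]
  simp only [hsymm 1 _]
  abel

end Splitting

theorem sum_sum_inv_mul_inv_mul_sq_le {B : Finset ℕ} {lam : ℕ → ℝ} {c : ℝ} (hc : 0 ≤ c)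
    (hB : ∀ l ∈ B, c < lam l) (T : ℕ → ℕ → ℝ) :
    ∑ k ∈ B, ∑ l ∈ B, (lam k)⁻¹ * (lam l)⁻¹ * T k l ^ 2
      ≤ ∑ k ∈ B, ∑ l ∈ B, (lam k)⁻¹ * (lam l - c)⁻¹ * T k l ^ 2 := by
  refine sum_le_sum fun k hk => sum_le_sum fun l hl => ?_
  have hk : 0 < lam k := hc.trans_lt (hB k hk)
  have hl : 0 < lam l - c := sub_pos.2 (hB l hl)
  gcongr
  linarith

theorem sum_sum_inv_mul_inv_mul_sq_nonneg {B : Finset ℕ} {lam : ℕ → ℝ}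
    (hB : ∀ k ∈ B, 0 ≤ lam k) (T : ℕ → ℕ → ℝ) :
    0 ≤ ∑ k ∈ B, ∑ l ∈ B, (lam k)⁻¹ * (lam l)⁻¹ * T k l ^ 2 :=
  sum_nonneg fun k hk => sum_nonneg fun l hl => by
    have := hB k hk
    have := hB l hl
    positivity

theorem gradient_terms_estimate_general (n μ : ℕ) (hμ1 : 1 ≤ μ) (hμn : μ ≤ n)
    (lam : ℕ → ℝ) (hpos : ∀ i ∈ Icc 1 n, 0 < lam i)
    (hgap : ∀ l ∈ Icc (μ + 1) n, lam 1 < lam l)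
    (T : ℕ → ℕ → ℝ)
    (hsymm : ∀ k l, T k l = T l k)
    (hzero : ∀ k l, 2 ≤ l → l ≤ μ → T k l = 0) :
    -2 * ∑ k ∈ Icc 1 n, ∑ l ∈ Icc (μ + 1) n,
          (lam k)⁻¹ * (lam l - lam 1)⁻¹ * (T k l) ^ 2
      + ∑ k ∈ Icc 1 n, ∑ l ∈ Icc 1 n, (lam k)⁻¹ * (lam l)⁻¹ * (T k l) ^ 2
    ≤ -2 * ∑ k ∈ Icc (μ + 1) n,
          (lam 1)⁻¹ * ((lam k - lam 1)⁻¹ - (lam k)⁻¹) * (T k 1) ^ 2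
      + (lam 1)⁻¹ ^ 2 * (T 1 1) ^ 2 := by
  have hl1 : 0 < lam 1 := hpos 1 (mem_Icc.2 ⟨le_rfl, hμ1.trans hμn⟩)
  have hzero' : ∀ k, ∀ l ∈ Icc 2 μ, T k l = 0 := fun k l hl =>
    hzero k l (mem_Icc.1 hl).1 (mem_Icc.1 hl).2
  rw [sum_Icc_one_eq_add_sum_Icc_of_eq_zero hμ1 hμn
      (fun k hk => sum_eq_zero fun l _ => by rw [hsymm, hzero' l k hk, sq, mul_zero, mul_zero]),
    sum_Icc_one_sum_Icc_one_eq_of_symm hμ1 hμn (fun k l => by rw [hsymm, mul_comm (lam k)⁻¹])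
      (fun k l hl => by rw [hzero' k l hl, sq, mul_zero, mul_zero])]
  have hrhs : ∑ k ∈ Icc (μ + 1) n, (lam 1)⁻¹ * ((lam k - lam 1)⁻¹ - (lam k)⁻¹) * T k 1 ^ 2
      = ∑ k ∈ Icc (μ + 1) n, (lam 1)⁻¹ * (lam k - lam 1)⁻¹ * T k 1 ^ 2
        - ∑ k ∈ Icc (μ + 1) n, (lam k)⁻¹ * (lam 1)⁻¹ * T k 1 ^ 2 := by
    rw [← sum_sub_distrib]
    exact sum_congr rfl fun k _ => by ring
  simp only [hsymm 1 _, hrhs, two_nsmul]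
  have hblock := sum_sum_inv_mul_inv_mul_sq_le hl1.le hgap T
  have hblock_nonneg := sum_sum_inv_mul_inv_mul_sq_nonneg
    (fun k hk => (hl1.trans (hgap k hk)).le) T
  linarith

/-- The estimate used in the proof of Theorem 4.2 to group the gradient terms: if
`λ₁ = ⋯ = λ_μ` are positive, `λ₁ < λ_l` for `l > μ`, and `T` is a symmetric array
with `T_{kl} = 0` for `2 ≤ l ≤ μ` (here `T_{kl}` stands for `∇_k h_{1l}`), then
`−2 ∑_k ∑_{l>μ} λ_k⁻¹ (λ_l − λ₁)⁻¹ T_{kl}² + ∑_k ∑_l λ_k⁻¹ λ_l⁻¹ T_{kl}²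
  ≤ −2 ∑_{k>μ} λ₁⁻¹ ((λ_k − λ₁)⁻¹ − λ_k⁻¹) T_{k1}² + λ₁⁻² T₁₁²`. -/
theorem gradient_terms_estimate (n μ : ℕ) (hn : 2 ≤ n) (hμ1 : 1 ≤ μ) (hμn : μ ≤ n)
    (lam : ℕ → ℝ) (hpos : ∀ i ∈ Icc 1 n, 0 < lam i)
    (hmult : ∀ i ∈ Icc 1 μ, lam i = lam 1)
    (hgap : ∀ l ∈ Icc (μ + 1) n, lam 1 < lam l)
    (T : ℕ → ℕ → ℝ)
    (hsymm : ∀ k l, T k l = T l k)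
    (hzero : ∀ k l, 2 ≤ l → l ≤ μ → T k l = 0) :
    -2 * ∑ k ∈ Icc 1 n, ∑ l ∈ Icc (μ + 1) n,
          (lam k)⁻¹ * (lam l - lam 1)⁻¹ * (T k l) ^ 2
      + ∑ k ∈ Icc 1 n, ∑ l ∈ Icc 1 n, (lam k)⁻¹ * (lam l)⁻¹ * (T k l) ^ 2
    ≤ -2 * ∑ k ∈ Icc (μ + 1) n,
          (lam 1)⁻¹ * ((lam k - lam 1)⁻¹ - (lam k)⁻¹) * (T k 1) ^ 2
      + (lam 1)⁻¹ ^ 2 * (T 1 1) ^ 2 :=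
  gradient_terms_estimate_general n μ hμ1 hμn lam hpos hgap T hsymm hzero
end
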